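/- arXiv:1512.00707 — 6 statements merged into one kernel-verified Lean document; each statement's English description precedes it below -/
import Mathlib

section
/- Let A, B, C, Δ be real with Δ < 0 and C − A > 0, and set Z_U(ℰ) = (Bℰ+Δ)/(2·(C−A)), ℰ_{1U} = Δ/(2(A−C) − B), ℰ_{2U} = Δ/(2(C−A) − B). Then for ℰ > 0: (i) if 2(A−C) < B ≤ 2(C−A), one has −ℰ < Z_U(ℰ) < ℰ if and only if ℰ > ℰ_{1U}; (ii) if B > 2(C−A), one has −ℰ < Z_U(ℰ) < ℰ if and only if ℰ_{1U} < ℰ < ℰ_{2U}; (iii) if B ≤ 2(A−C), there is no ℰ > 0 with −ℰ < Z_U(ℰ) < ℰ. -/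
/-! With `k = 2 (C - A) > 0`, both inequalities `-ℰ < Z_U(ℰ)` and `Z_U(ℰ) < ℰ` are linear in `ℰ`
after clearing the positive denominator `k`. Each one either is a threshold condition on `ℰ`
(when its coefficient of `ℰ` has the right sign) or, because `Δ < 0`, holds always resp. never
for `ℰ ≥ 0`. The sign of `B` relative to `±k` decides which case occurs for each inequality. -/

section AffineQuotient

variable {α : Type*} [Field α] [LinearOrder α] [IsStrictOrderedRing α] {k B Δ E : α}

theorem neg_lt_affine_div_iff (hk : 0 < k) (hB : -k - B < 0) :
    -E < (B * E + Δ) / k ↔ Δ / (-k - B) < E := by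
  rw [lt_div_iff₀ hk, div_lt_iff_of_neg hB]
  constructor <;> intro h <;> linarith

theorem affine_div_lt_iff (hk : 0 < k) (hB : k - B < 0) :
    (B * E + Δ) / k < E ↔ E < Δ / (k - B) := by
  rw [div_lt_iff₀ hk, lt_div_iff_of_neg hB]
  constructor <;> intro h <;> linarith

theorem affine_div_lt_self (hk : 0 < k) (hB : B ≤ k) (hΔ : Δ < 0) (hE : 0 ≤ E) :
    (B * E + Δ) / k < E := by
  rw [div_lt_iff₀ hk]
  nlinarith [mul_le_mul_of_nonneg_right hB hE]

theorem not_neg_lt_affine_div (hk : 0 < k) (hB : B ≤ -k) (hΔ : Δ < 0) (hE : 0 ≤ E) :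
    ¬-E < (B * E + Δ) / k := by
  rw [not_lt, div_le_iff₀ hk]
  nlinarith [mul_le_mul_of_nonneg_right hB hE]

end AffineQuotient

/-- Existence range of the inclined family: for Δ < 0 and C − A > 0, the condition
−ℰ < Z_U(ℰ) < ℰ holds iff ℰ > ℰ_{1U} (when 2(A−C) < B ≤ 2(C−A)), iff
ℰ_{1U} < ℰ < ℰ_{2U} (when B > 2(C−A)), and never (when B ≤ 2(A−C)). -/
theorem inclined_existence_thresholds (A B C Δ : ℝ) (hΔ : Δ < 0) (hCA : 0 < C - A) :
    let ZU : ℝ → ℝ := fun E => (B * E + Δ) / (2 * (C - A))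
    let E1U := Δ / (2 * (A - C) - B)
    let E2U := Δ / (2 * (C - A) - B)
    (2 * (A - C) < B ∧ B ≤ 2 * (C - A) →
      ∀ E : ℝ, 0 < E → ((-E < ZU E ∧ ZU E < E) ↔ E1U < E))
    ∧ (2 * (C - A) < B →
      ∀ E : ℝ, 0 < E → ((-E < ZU E ∧ ZU E < E) ↔ E1U < E ∧ E < E2U))
    ∧ (B ≤ 2 * (A - C) →
      ∀ E : ℝ, 0 < E → ¬(-E < ZU E ∧ ZU E < E)) := by
  intro ZU E1U E2U
  have hk : 0 < 2 * (C - A) := by linarith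
  have hE1U : E1U = Δ / (-(2 * (C - A)) - B) := by
    simp only [E1U]
    ring
  refine ⟨fun ⟨hlo, hhi⟩ E hE => ?_, fun hB E _ => ?_, fun hB E hE => ?_⟩
  · rw [hE1U, ← neg_lt_affine_div_iff hk (by linarith)]
    exact and_iff_left (affine_div_lt_self hk hhi hΔ hE.le)
  · rw [hE1U, ← neg_lt_affine_div_iff hk (by linarith), ← affine_div_lt_iff hk (by linarith)]
  · exact fun h => not_neg_lt_affine_div hk (by linarith) hΔ hE.le h.1
end

section
/- Let A, B, C, Δ be real with Δ < 0 and A + C ≠ 0, and set Z_L(ℰ) = −(Bℰ+Δ)/(2·(A+C)), ℰ_{1L} = Δ/(2(A+C) − B), ℰ_{2L} = Δ/(−2(A+C) − B). Then for ℰ > 0: (a) if A + C < 0: (i) when 2(A+C) < B ≤ −2(A+C), one has −ℰ < Z_L(ℰ) < ℰ if and only if ℰ > ℰ_{1L}; (ii) when B > −2(A+C), one has −ℰ < Z_L(ℰ) < ℰ if and only if ℰ_{1L} < ℰ < ℰ_{2L}; (b) if A + C > 0: (i) when −2(A+C) < B ≤ 2(A+C), one has −ℰ < Z_L(ℰ)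 < ℰ if and only if ℰ > ℰ_{2L}; (ii) when B > 2(A+C), one has −ℰ < Z_L(ℰ) < ℰ if and only if ℰ_{2L} < ℰ < ℰ_{1L}. -/
/-!
With `k = |2(A+C)|`, the condition `|Z_L(ℰ)| < ℰ` reads `|Bℰ + Δ| < kℰ`, i.e.
`-Δ < (B + k)ℰ` and `(B - k)ℰ < -Δ`. For `B > -k` the first inequality is a lower threshold on
`ℰ`; the second is automatic when `B ≤ k` (because `Δ < 0 < ℰ`) and an upper threshold when
`B > k`. The sign of `A + C` only decides whether `k = -2(A+C)` or `k = 2(A+C)`, i.e. which of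
`ℰ_{1L}`, `ℰ_{2L}` is the lower and which the upper threshold.
-/

section Thresholds

variable {K : Type*} [Field K] [LinearOrder K] [IsStrictOrderedRing K] {B Δ k E : K}

theorem neg_mul_lt_add_iff_div_lt (h : 0 < B + k) : -(k * E) < B * E + Δ ↔ Δ / (-k - B) < E := by
  rw [div_lt_iff_of_neg (by linarith)]
  constructor <;> intro <;> linarith

theorem add_lt_mul_iff_lt_div (h : k < B) : B * E + Δ < k * E ↔ E < Δ / (k - B) := by
  rw [lt_div_iff_of_neg (by linarith)]
  constructor <;> intro <;> linarith

theorem add_lt_mul_of_le (h : B ≤ k) (hΔ : Δ < 0) (hE : 0 ≤ E) : B * E + Δ < k * E := by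
  nlinarith [mul_nonneg hE (sub_nonneg.2 h)]

theorem abs_neg_div_lt_iff {a d : K} (hd : d ≠ 0) : |-a / d| < E ↔ |a| < |d| * E := by
  rw [abs_div, abs_neg, div_lt_iff₀ (abs_pos.2 hd), mul_comm]

end Thresholds

/-- Existence range of the loop family: for Δ < 0 and A + C ≠ 0, the condition
−ℰ < Z_L(ℰ) < ℰ is characterized by the thresholds ℰ_{1L} and ℰ_{2L}, with the
order of the bifurcations depending on the sign of A + C. -/
theorem loop_existence_thresholds (A B C Δ : ℝ) (hΔ : Δ < 0) (hAC : A + C ≠ 0) :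
    let ZL : ℝ → ℝ := fun E => -(B * E + Δ) / (2 * (A + C))
    let E1L := Δ / (2 * (A + C) - B)
    let E2L := Δ / (-(2 * (A + C)) - B)
    (A + C < 0 →
      (2 * (A + C) < B ∧ B ≤ -(2 * (A + C)) →
        ∀ E : ℝ, 0 < E → ((-E < ZL E ∧ ZL E < E) ↔ E1L < E))
      ∧ (-(2 * (A + C)) < B →
        ∀ E : ℝ, 0 < E → ((-E < ZL E ∧ ZL E < E) ↔ E1L < E ∧ E < E2L)))
    ∧ (0 < A + C →
      (-(2 * (A + C)) < B ∧ B ≤ 2 * (A + C) →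
        ∀ E : ℝ, 0 < E → ((-E < ZL E ∧ ZL E < E) ↔ E2L < E))
      ∧ (2 * (A + C) < B →
        ∀ E : ℝ, 0 < E → ((-E < ZL E ∧ ZL E < E) ↔ E2L < E ∧ E < E1L))) := by
  intro ZL E1L E2L
  have window (E : ℝ) : (-E < ZL E ∧ ZL E < E) ↔
      -(|2 * (A + C)| * E) < B * E + Δ ∧ B * E + Δ < |2 * (A + C)| * E := by
    rw [← abs_lt, ← abs_lt]
    exact abs_neg_div_lt_iff (mul_ne_zero two_ne_zero hAC)
  refine ⟨fun hs => ?_, fun hs => ?_⟩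
  · rw [abs_of_neg (by linarith)] at window
    refine ⟨fun ⟨hB₁, hB₂⟩ E hE => ?_, fun hB E _ => ?_⟩
    · rw [window, neg_mul_lt_add_iff_div_lt (by linarith), neg_neg,
        and_iff_left (add_lt_mul_of_le hB₂ hΔ hE.le)]
    · rw [window, neg_mul_lt_add_iff_div_lt (by linarith), add_lt_mul_iff_lt_div hB, neg_neg]
  · rw [abs_of_pos (by linarith)] at window
    refine ⟨fun ⟨hB₁, hB₂⟩ E hE => ?_, fun hB E _ => ?_⟩
    · rw [window, neg_mul_lt_add_iff_div_lt (by linarith),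
        and_iff_left (add_lt_mul_of_le hB₂ hΔ hE.le)]
    · rw [window, neg_mul_lt_add_iff_div_lt (by linarith), add_lt_mul_iff_lt_div hB]
end

section
/- Let A, B, C, Δ be real with C > 0 and A < C, let ℰ > 0, and let 𝓛_ℰ = {(X, Y, Z) ∈ ℝ³ : X² + Y² = (ℰ² − Z²)² and |Z| ≤ ℰ} be the lemon space, with ℋ(X, Y, Z) = C·X + (Bℰ+Δ)·Z + A·Z². Set Z_U = (Bℰ+Δ)/(2·(C−A)) and h_U = C·ℰ² + (Bℰ+Δ)²/(4·(C−A)). Then ℋ(p) ≤ h_U for every p ∈ 𝓛_ℰ; moreover the value h_U is attained on 𝓛_ℰ if and only if −ℰ ≤ Z_U ≤ ℰ, in which case it is attained at the point (ℰ² − Z_U², 0, Z_U). -/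
/-!
On the lemon `X ≤ |X| ≤ ℰ² - Z²`, so for `C > 0` the Hamiltonian is dominated by its value on the
"upper rim" `Y = 0`, `X = ℰ² - Z²`. There it is the concave parabola
`Cℰ² + (Bℰ + Δ) Z - (C - A) Z²`, whose vertex is at `Z_U` with value `h_U`. Equality forces
`Z = Z_U`, which is possible exactly when `|Z_U| ≤ ℰ`.
-/

def lemon (E : ℝ) : Set (ℝ × ℝ × ℝ) :=
  {p | p.1 ^ 2 + p.2.1 ^ 2 = (E ^ 2 - p.2.2 ^ 2) ^ 2 ∧ |p.2.2| ≤ E}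

/-- `b` stands for the paper's coefficient `Bℰ + Δ`. -/
def reducedHamiltonian (A b C : ℝ) (p : ℝ × ℝ × ℝ) : ℝ :=
  C * p.1 + b * p.2.2 + A * p.2.2 ^ 2

section

variable {A C E : ℝ} (b : ℝ)

theorem fst_le_of_mem_lemon {p : ℝ × ℝ × ℝ} (hp : p ∈ lemon E) : p.1 ≤ E ^ 2 - p.2.2 ^ 2 := by
  obtain ⟨hsum, hZ⟩ := hp
  have hrim : 0 ≤ E ^ 2 - p.2.2 ^ 2 := sub_nonneg.mpr (sq_le_sq' (abs_le.mp hZ).1 (abs_le.mp hZ).2)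
  have hsq : p.1 ^ 2 ≤ (E ^ 2 - p.2.2 ^ 2) ^ 2 := by nlinarith [sq_nonneg p.2.1]
  exact (abs_le_of_sq_le_sq' hsq hrim).2

theorem mk_mem_lemon {Z : ℝ} (hZ : |Z| ≤ E) : (E ^ 2 - Z ^ 2, 0, Z) ∈ lemon E :=
  ⟨by ring, hZ⟩

theorem reducedHamiltonian_mk_eq (hAC : A ≠ C) (Z : ℝ) :
    reducedHamiltonian A b C (E ^ 2 - Z ^ 2, 0, Z) =
      C * E ^ 2 + b ^ 2 / (4 * (C - A)) - (C - A) * (Z - b / (2 * (C - A))) ^ 2 := by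
  have : C - A ≠ 0 := sub_ne_zero.mpr hAC.symm
  simp only [reducedHamiltonian]
  field_simp
  ring

theorem reducedHamiltonian_le_of_mem_lemon (hC : 0 ≤ C) (hAC : A ≠ C) {p : ℝ × ℝ × ℝ}
    (hp : p ∈ lemon E) :
    reducedHamiltonian A b C p ≤
      C * E ^ 2 + b ^ 2 / (4 * (C - A)) - (C - A) * (p.2.2 - b / (2 * (C - A))) ^ 2 :=
  calc reducedHamiltonian A b C p
      ≤ reducedHamiltonian A b C (E ^ 2 - p.2.2 ^ 2, 0, p.2.2) := by
        simp only [reducedHamiltonian]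
        gcongr
        exact fst_le_of_mem_lemon hp
    _ = _ := reducedHamiltonian_mk_eq b hAC p.2.2

end

theorem hamiltonian_max_on_lemon_general (A B C Δ : ℝ) (hC : 0 < C) (hAC : A < C)
    (E : ℝ) :
    let L : Set (ℝ × ℝ × ℝ) :=
      {p | p.1 ^ 2 + p.2.1 ^ 2 = (E ^ 2 - p.2.2 ^ 2) ^ 2 ∧ |p.2.2| ≤ E}
    let H : ℝ × ℝ × ℝ → ℝ :=
      fun p => C * p.1 + (B * E + Δ) * p.2.2 + A * p.2.2 ^ 2
    let ZU := (B * E + Δ) / (2 * (C - A))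
    let hU := C * E ^ 2 + (B * E + Δ) ^ 2 / (4 * (C - A))
    (∀ p ∈ L, H p ≤ hU)
    ∧ ((∃ p ∈ L, H p = hU) ↔ (-E ≤ ZU ∧ ZU ≤ E))
    ∧ (-E ≤ ZU → ZU ≤ E →
        (E ^ 2 - ZU ^ 2, 0, ZU) ∈ L ∧ H (E ^ 2 - ZU ^ 2, 0, ZU) = hU) := by
  intro L H ZU hU
  have hgap : 0 < C - A := sub_pos.mpr hAC
  have hle : ∀ p ∈ L, H p ≤ hU - (C - A) * (p.2.2 - ZU) ^ 2 := fun p hp =>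
    reducedHamiltonian_le_of_mem_lemon (B * E + Δ) hC.le hAC.ne hp
  have hmax : -E ≤ ZU → ZU ≤ E →
      (E ^ 2 - ZU ^ 2, 0, ZU) ∈ L ∧ H (E ^ 2 - ZU ^ 2, 0, ZU) = hU := by
    intro h₁ h₂
    refine ⟨mk_mem_lemon (abs_le.mpr ⟨h₁, h₂⟩), ?_⟩
    rw [show H _ = _ from reducedHamiltonian_mk_eq (B * E + Δ) hAC.ne ZU]
    simp [ZU, hU]
  refine ⟨fun p hp => (hle p hp).trans (sub_le_self _ (by positivity)), ⟨?_, ?_⟩, hmax⟩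
  · rintro ⟨p, hp, hpU⟩
    have hZ : p.2.2 = ZU := by
      have : (C - A) * (p.2.2 - ZU) ^ 2 ≤ 0 := by linarith [hle p hp]
      have : (p.2.2 - ZU) ^ 2 = 0 :=
        le_antisymm (nonpos_of_mul_nonpos_right this hgap) (sq_nonneg _)
      exact sub_eq_zero.mp (pow_eq_zero_iff two_ne_zero |>.mp this)
    exact hZ ▸ abs_le.mp hp.2
  · exact fun ⟨h₁, h₂⟩ => ⟨_, hmax h₁ h₂⟩

/-- In the reference-type case C > 0, A < C, the reduced Hamiltonian is bounded above
on the lemon by h_U; the bound is attained iff −ℰ ≤ Z_U ≤ ℰ, in which case it is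
attained at the inclined point (ℰ² − Z_U², 0, Z_U). -/
theorem hamiltonian_max_on_lemon (A B C Δ : ℝ) (hC : 0 < C) (hAC : A < C)
    (E : ℝ) (hE : 0 < E) :
    let L : Set (ℝ × ℝ × ℝ) :=
      {p | p.1 ^ 2 + p.2.1 ^ 2 = (E ^ 2 - p.2.2 ^ 2) ^ 2 ∧ |p.2.2| ≤ E}
    let H : ℝ × ℝ × ℝ → ℝ :=
      fun p => C * p.1 + (B * E + Δ) * p.2.2 + A * p.2.2 ^ 2
    let ZU := (B * E + Δ) / (2 * (C - A))
    let hU := C * E ^ 2 + (B * E + Δ) ^ 2 / (4 * (C - A))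
    (∀ p ∈ L, H p ≤ hU)
    ∧ ((∃ p ∈ L, H p = hU) ↔ (-E ≤ ZU ∧ ZU ≤ E))
    ∧ (-E ≤ ZU → ZU ≤ E →
        (E ^ 2 - ZU ^ 2, 0, ZU) ∈ L ∧ H (E ^ 2 - ZU ^ 2, 0, ZU) = hU) :=
  hamiltonian_max_on_lemon_general A B C Δ hC hAC E
end

section
/- Let A, B, C, Δ be real with C > 0 and A + C > 0, let ℰ > 0, and suppose Z_L = −(Bℰ+Δ)/(2·(A+C)) satisfies −ℰ ≤ Z_L ≤ ℰ. Let 𝓛_ℰ = {(X, Y, Z) ∈ ℝ³ : X² + Y² = (ℰ² − Z²)² and |Z| ≤ ℰ} and ℋ(X, Y, Z) = C·X + (Bℰ+Δ)·Z + A·Z², and set h_L = −C·ℰ² − (Bℰ+Δ)²/(4·(A+C)). Then ℋ(p) ≥ h_L for every p ∈ 𝓛_ℰ, with equality attained at the loop point (−(ℰ² − Z_L²), 0, Z_L). -/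
lemma neg_le_of_sq_add_sq_eq_sq {x y w : ℝ} (hw : 0 ≤ w) (h : x ^ 2 + y ^ 2 = w ^ 2) :
    -w ≤ x :=
  (abs_le_of_sq_le_sq' (by nlinarith [sq_nonneg y]) hw).1

namespace lemon

variable {E : ℝ}

lemma sq_snd_snd_le {p : ℝ × ℝ × ℝ} (hp : p ∈ lemon E) : p.2.2 ^ 2 ≤ E ^ 2 :=
  sq_le_sq' (abs_le.mp hp.2).1 (abs_le.mp hp.2).2

lemma neg_le_fst {p : ℝ × ℝ × ℝ} (hp : p ∈ lemon E) : -(E ^ 2 - p.2.2 ^ 2) ≤ p.1 :=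
  neg_le_of_sq_add_sq_eq_sq (sub_nonneg.mpr (sq_snd_snd_le hp)) hp.1

lemma loop_mem {Z : ℝ} (hZ : |Z| ≤ E) : (-(E ^ 2 - Z ^ 2), 0, Z) ∈ lemon E :=
  ⟨by ring, hZ⟩

end lemon

section Hamiltonian

variable {A b C : ℝ}

lemma reducedHamiltonian_sub_eq (hAC : A + C ≠ 0) (E : ℝ) (p : ℝ × ℝ × ℝ) :
    reducedHamiltonian A b C p - (-(C * E ^ 2) - b ^ 2 / (4 * (A + C)))
      = C * (p.1 + (E ^ 2 - p.2.2 ^ 2)) + (A + C) * (p.2.2 - -b / (2 * (A + C))) ^ 2 := by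
  unfold reducedHamiltonian
  field_simp
  ring

lemma le_reducedHamiltonian (hC : 0 ≤ C) (hAC : 0 < A + C) {E : ℝ} {p : ℝ × ℝ × ℝ}
    (hp : p ∈ lemon E) :
    -(C * E ^ 2) - b ^ 2 / (4 * (A + C)) ≤ reducedHamiltonian A b C p := by
  have hX : 0 ≤ C * (p.1 + (E ^ 2 - p.2.2 ^ 2)) :=
    mul_nonneg hC (by linarith [lemon.neg_le_fst hp])
  have hZ : 0 ≤ (A + C) * (p.2.2 - -b / (2 * (A + C))) ^ 2 := by positivity
  linarith [reducedHamiltonian_sub_eq (b := b) hAC.ne' E p]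

lemma reducedHamiltonian_loop (hAC : A + C ≠ 0) (E : ℝ) :
    reducedHamiltonian A b C (-(E ^ 2 - (-b / (2 * (A + C))) ^ 2), 0, -b / (2 * (A + C)))
      = -(C * E ^ 2) - b ^ 2 / (4 * (A + C)) := by
  unfold reducedHamiltonian
  field_simp
  ring

end Hamiltonian

theorem hamiltonian_min_at_loop_general (A B C Δ : ℝ) (hC : 0 < C) (hAC : 0 < A + C)
    (E : ℝ)
    (hZL1 : -E ≤ -(B * E + Δ) / (2 * (A + C)))
    (hZL2 : -(B * E + Δ) / (2 * (A + C)) ≤ E) :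
    let ZL := -(B * E + Δ) / (2 * (A + C))
    let L : Set (ℝ × ℝ × ℝ) :=
      {p | p.1 ^ 2 + p.2.1 ^ 2 = (E ^ 2 - p.2.2 ^ 2) ^ 2 ∧ |p.2.2| ≤ E}
    let H : ℝ × ℝ × ℝ → ℝ :=
      fun p => C * p.1 + (B * E + Δ) * p.2.2 + A * p.2.2 ^ 2
    let hL := -(C * E ^ 2) - (B * E + Δ) ^ 2 / (4 * (A + C))
    (∀ p ∈ L, hL ≤ H p)
    ∧ (-(E ^ 2 - ZL ^ 2), 0, ZL) ∈ L
    ∧ H (-(E ^ 2 - ZL ^ 2), 0, ZL) = hL :=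
  ⟨fun _ hp => le_reducedHamiltonian hC.le hAC hp,
    lemon.loop_mem (abs_le.mpr ⟨hZL1, hZL2⟩),
    reducedHamiltonian_loop hAC.ne' E⟩

/-- For C > 0, A + C > 0 and −ℰ ≤ Z_L ≤ ℰ, the reduced Hamiltonian on the lemon is
bounded below by h_L, with equality attained at the loop point (−(ℰ²−Z_L²), 0, Z_L). -/
theorem hamiltonian_min_at_loop (A B C Δ : ℝ) (hC : 0 < C) (hAC : 0 < A + C)
    (E : ℝ) (hE : 0 < E)
    (hZL1 : -E ≤ -(B * E + Δ) / (2 * (A + C)))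
    (hZL2 : -(B * E + Δ) / (2 * (A + C)) ≤ E) :
    let ZL := -(B * E + Δ) / (2 * (A + C))
    let L : Set (ℝ × ℝ × ℝ) :=
      {p | p.1 ^ 2 + p.2.1 ^ 2 = (E ^ 2 - p.2.2 ^ 2) ^ 2 ∧ |p.2.2| ≤ E}
    let H : ℝ × ℝ × ℝ → ℝ :=
      fun p => C * p.1 + (B * E + Δ) * p.2.2 + A * p.2.2 ^ 2
    let hL := -(C * E ^ 2) - (B * E + Δ) ^ 2 / (4 * (A + C))
    (∀ p ∈ L, hL ≤ H p)
    ∧ (-(E ^ 2 - ZL ^ 2), 0, ZL) ∈ L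
    ∧ H (-(E ^ 2 - ZL ^ 2), 0, ZL) = hL :=
  hamiltonian_min_at_loop_general A B C Δ hC hAC E hZL1 hZL2
end

section
/- Let A, B, C, Δ be real with C > 0, A < C and A + C ≤ 0, let ℰ > 0, and suppose Z_U = (Bℰ+Δ)/(2·(C−A)) satisfies −ℰ ≤ Z_U ≤ ℰ. Then the image of the lemon 𝓛_ℰ = {(X, Y, Z) ∈ ℝ³ : X² + Y² = (ℰ² − Z²)², |Z| ≤ ℰ} under the reduced Hamiltonian ℋ(X, Y, Z) = C·X + (Bℰ+Δ)·Z + A·Z² is exactly the closed interval [min(h1, h2), h_U], where h1 = ℰ·((A−B)ℰ − Δ), h2 = ℰ·((A+B)ℰ + Δ), and h_U = C·ℰ² + (Bℰ+Δ)²/(4·(C−A)). (This interval is the fibre of the energy-momentum map over ℰ in the reference case after the first bifurcation.) -/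
/-! Write `b = Bℰ + Δ`. On the lemon `|X| ≤ ℰ² - Z²`, so since `C > 0` the Hamiltonian lies
between its values at `X = ±(ℰ² - Z²)`. At `X = ℰ² - Z²` it is the downward parabola
`Cℰ² + bZ - (C - A)Z²`, whose top value `h_U` is taken at its vertex `Z_U`. At `X = -(ℰ² - Z²)` it
is a quadratic in `Z` with leading coefficient `A + C ≤ 0`, hence concave, hence minimal on
`[-ℰ, ℰ]` at an endpoint, where it equals `h1` or `h2`. Conversely, along the meridian
`Y = 0, X = ℰ² - Z²` the Hamiltonian is continuous in `Z ∈ [-ℰ, ℰ]` and takes the values `h1`, `h2`,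
`h_U` at `-ℰ`, `ℰ`, `Z_U ∈ [-ℰ, ℰ]`, so by connectedness it sweeps out `[min h1 h2, h_U]`. -/

open Set

lemma abs_le_of_sq_add_sq_eq_sq {x y r : ℝ} (h : x ^ 2 + y ^ 2 = r ^ 2) (hr : 0 ≤ r) :
    |x| ≤ r :=
  abs_le_of_sq_le_sq (by nlinarith [sq_nonneg y]) hr

lemma mul_sub_mul_sq_le_sq_div {b k : ℝ} (hk : 0 < k) (z : ℝ) :
    b * z - k * z ^ 2 ≤ b ^ 2 / (4 * k) := by
  have hsq : b ^ 2 / (4 * k) - (b * z - k * z ^ 2) = (2 * k * z - b) ^ 2 / (4 * k) := by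
    field_simp
    ring
  have := div_nonneg (sq_nonneg (2 * k * z - b)) (by positivity : (0 : ℝ) ≤ 4 * k)
  linarith

lemma mul_sub_mul_sq_vertex {b k : ℝ} (hk : k ≠ 0) :
    b * (b / (2 * k)) - k * (b / (2 * k)) ^ 2 = b ^ 2 / (4 * k) := by
  field_simp
  ring

lemma concaveOn_quadratic {a : ℝ} (ha : a ≤ 0) (b c : ℝ) :
    ConcaveOn ℝ univ fun z : ℝ ↦ a * z ^ 2 + b * z + c := by
  have hsq : ConcaveOn ℝ univ fun z : ℝ ↦ -((-a) • z ^ 2) :=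
    ((even_two.convexOn_pow (𝕜 := ℝ)).smul (neg_nonneg.mpr ha)).neg
  refine ((hsq.add ((LinearMap.mul ℝ ℝ b).concaveOn convex_univ)).add_const c).congr ?_
  intro z _
  simp only [Pi.add_apply, smul_eq_mul, LinearMap.mul_apply']
  ring

theorem Icc_min_subset_image_Icc {α β : Type*} [ConditionallyCompleteLinearOrder α]
    [TopologicalSpace α] [OrderTopology α] [DenselyOrdered α] [LinearOrder β]
    [TopologicalSpace β] [OrderClosedTopology β] {f : α → β} {u v w : α}
    (hf : ContinuousOn f (Icc u v)) (hw : w ∈ Icc u v) :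
    Icc (min (f u) (f v)) (f w) ⊆ f '' Icc u v := by
  have huv : u ≤ v := hw.1.trans hw.2
  have hconn : IsPreconnected (f '' Icc u v) := isPreconnected_Icc.image f hf
  refine hconn.Icc_subset ?_ (mem_image_of_mem f hw)
  rcases min_choice (f u) (f v) with h | h <;> rw [h]
  · exact mem_image_of_mem f (left_mem_Icc.mpr huv)
  · exact mem_image_of_mem f (right_mem_Icc.mpr huv)

theorem energy_momentum_fibre_general (A B C Δ : ℝ) (hC : 0 < C) (hAC : A < C)
    (hACsum : A + C ≤ 0) (E : ℝ)
    (hZU1 : -E ≤ (B * E + Δ) / (2 * (C - A)))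
    (hZU2 : (B * E + Δ) / (2 * (C - A)) ≤ E) :
    let L : Set (ℝ × ℝ × ℝ) :=
      {p | p.1 ^ 2 + p.2.1 ^ 2 = (E ^ 2 - p.2.2 ^ 2) ^ 2 ∧ |p.2.2| ≤ E}
    let H : ℝ × ℝ × ℝ → ℝ :=
      fun p => C * p.1 + (B * E + Δ) * p.2.2 + A * p.2.2 ^ 2
    let h1 := E * ((A - B) * E - Δ)
    let h2 := E * ((A + B) * E + Δ)
    let hU := C * E ^ 2 + (B * E + Δ) ^ 2 / (4 * (C - A))
    H '' L = Set.Icc (min h1 h2) hU := by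
  intro L H h1 h2 hU
  set b := B * E + Δ
  have hCA : 0 < C - A := by linarith
  let g : ℝ → ℝ := fun Z ↦ (A + C) * Z ^ 2 + b * Z + -C * E ^ 2
  let f : ℝ → ℝ := fun Z ↦ C * (E ^ 2 - Z ^ 2) + b * Z + A * Z ^ 2
  apply subset_antisymm
  · rintro _ ⟨⟨X, Y, Z⟩, ⟨hXY, hZ⟩, rfl⟩
    have hr : 0 ≤ E ^ 2 - Z ^ 2 := sub_nonneg.mpr (sq_le_sq' (abs_le.mp hZ).1 (abs_le.mp hZ).2)
    obtain ⟨hXl, hXu⟩ := abs_le.mp (abs_le_of_sq_add_sq_eq_sq hXY hr)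
    constructor
    · calc min h1 h2 = min (g (-E)) (g E) := by simp only [g, h1, h2, b]; ring_nf
        _ ≤ g Z := (concaveOn_quadratic hACsum b _).min_le_of_mem_Icc trivial trivial
            (abs_le.mp hZ)
        _ ≤ H (X, Y, Z) := by
          simp only [g, H]; linarith [mul_le_mul_of_nonneg_left hXl hC.le]
    · calc H (X, Y, Z) ≤ C * E ^ 2 + (b * Z - (C - A) * Z ^ 2) := by simp only [H]; nlinarith
        _ ≤ hU := by linarith [mul_sub_mul_sq_le_sq_div (b := b) hCA Z]
  · calc Icc (min h1 h2) hU = Icc (min (f (-E)) (f E)) (f (b / (2 * (C - A)))) := by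
          have hvertex := mul_sub_mul_sq_vertex (b := b) hCA.ne'
          congr 1
          · congr 1 <;> ring
          · linear_combination -hvertex
      _ ⊆ f '' Icc (-E) E := Icc_min_subset_image_Icc (by fun_prop) ⟨hZU1, hZU2⟩
      _ ⊆ H '' L := by
          rintro _ ⟨Z, hZ, rfl⟩
          exact ⟨(E ^ 2 - Z ^ 2, 0, Z), ⟨by simp, abs_le.mpr hZ⟩, rfl⟩

/-- In the reference case (C > 0, A < C, A + C ≤ 0) after the first bifurcation
(−ℰ ≤ Z_U ≤ ℰ), the image of the lemon under the reduced Hamiltonian is exactly the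
closed interval [min(h1, h2), h_U]: the fibre of the energy-momentum map over ℰ. -/
theorem energy_momentum_fibre (A B C Δ : ℝ) (hC : 0 < C) (hAC : A < C)
    (hACsum : A + C ≤ 0) (E : ℝ) (hE : 0 < E)
    (hZU1 : -E ≤ (B * E + Δ) / (2 * (C - A)))
    (hZU2 : (B * E + Δ) / (2 * (C - A)) ≤ E) :
    let L : Set (ℝ × ℝ × ℝ) :=
      {p | p.1 ^ 2 + p.2.1 ^ 2 = (E ^ 2 - p.2.2 ^ 2) ^ 2 ∧ |p.2.2| ≤ E}
    let H : ℝ × ℝ × ℝ → ℝ :=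
      fun p => C * p.1 + (B * E + Δ) * p.2.2 + A * p.2.2 ^ 2
    let h1 := E * ((A - B) * E - Δ)
    let h2 := E * ((A + B) * E + Δ)
    let hU := C * E ^ 2 + (B * E + Δ) ^ 2 / (4 * (C - A))
    H '' L = Set.Icc (min h1 h2) hU :=
  energy_momentum_fibre_general A B C Δ hC hAC hACsum E hZU1 hZU2
end

section
/- Let A, B, C, Δ, ℰ be real with A ≠ C, and set Z_U = (Bℰ+Δ)/(2·(C−A)). Then the square of the reduced (normal) frequency of the inclined family satisfies the identity (8C/(C−A))·((2(A−C) − B)·ℰ − Δ)·(Δ + (2(A−C) + B)·ℰ) = 32·C·(C−A)·(ℰ² − Z_U²). Consequently, if C·(C−A) > 0 and ℰ > 0, this quantity is strictly positive if and only if −ℰ < Z_U < ℰ; in particular, in the reference case C > 0 > A the inclined periodic orbits have real nonzero normal frequency (and are stable) throughout their existence range. -/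
/-! The two affine factors are `−2 (C − A) (ℰ + Z_U)` and `2 (C − A) (Z_U − ℰ)`, so the
frequency is `32 C (C − A) (ℰ² − Z_U²)`, whose sign for `C (C − A) > 0` is that of
`ℰ² − Z_U²`. -/

theorem pos_mul_sq_sub_sq_iff {k E z : ℝ} (hk : 0 < k) (hE : 0 < E) :
    0 < k * (E ^ 2 - z ^ 2) ↔ -E < z ∧ z < E := by
  rw [mul_pos_iff_of_pos_left hk, sub_pos, sq_lt_sq, abs_of_pos hE, abs_lt]

/-- At `A = C` both sides vanish, the left one through the junk value `x / 0 = 0`. -/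
theorem inclined_freq_sq_eq (A B C Δ E : ℝ) :
    (8 * C / (C - A)) * ((2 * (A - C) - B) * E - Δ) * (Δ + (2 * (A - C) + B) * E)
      = 32 * C * (C - A) * (E ^ 2 - ((B * E + Δ) / (2 * (C - A))) ^ 2) := by
  rcases eq_or_ne (C - A) 0 with hCA | hCA
  · simp [hCA]
  · field_simp
    ring

theorem inclined_normal_frequency_general (A B C Δ E : ℝ) :
    let ZU := (B * E + Δ) / (2 * (C - A))
    let ω2sq := (8 * C / (C - A)) * ((2 * (A - C) - B) * E - Δ)
                  * (Δ + (2 * (A - C) + B) * E)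
    ω2sq = 32 * C * (C - A) * (E ^ 2 - ZU ^ 2)
    ∧ (0 < C * (C - A) → 0 < E → (0 < ω2sq ↔ (-E < ZU ∧ ZU < E)))
    ∧ (0 < C → A < 0 → 0 < E → -E < ZU → ZU < E → 0 < ω2sq) := by
  intro ZU ω2sq
  have hsq : ω2sq = 32 * C * (C - A) * (E ^ 2 - ZU ^ 2) := inclined_freq_sq_eq A B C Δ E
  have hpos_iff : 0 < C * (C - A) → 0 < E → (0 < ω2sq ↔ (-E < ZU ∧ ZU < E)) := by
    intro hC hE
    rw [hsq]
    exact pos_mul_sq_sub_sq_iff (by linarith) hE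
  refine ⟨hsq, hpos_iff, fun hC hA hE hlow hup => ?_⟩
  exact (hpos_iff (mul_pos hC (by linarith)) hE).2 ⟨hlow, hup⟩

/-- The square of the reduced (normal) frequency of the inclined family equals
32 C (C−A)(ℰ² − Z_U²); hence if C(C−A) > 0 and ℰ > 0 it is positive iff
−ℰ < Z_U < ℰ; in particular in the reference case C > 0 > A the inclined orbits
have real nonzero normal frequency throughout their existence range. -/
theorem inclined_normal_frequency (A B C Δ E : ℝ) (hAC : A ≠ C) :
    let ZU := (B * E + Δ) / (2 * (C - A))
    let ω2sq := (8 * C / (C - A)) * ((2 * (A - C) - B) * E - Δ)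
                  * (Δ + (2 * (A - C) + B) * E)
    ω2sq = 32 * C * (C - A) * (E ^ 2 - ZU ^ 2)
    ∧ (0 < C * (C - A) → 0 < E → (0 < ω2sq ↔ (-E < ZU ∧ ZU < E)))
    ∧ (0 < C → A < 0 → 0 < E → -E < ZU → ZU < E → 0 < ω2sq) :=
  inclined_normal_frequency_general A B C Δ E
end
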